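/- Let k be a field and n a natural number. Let FI be the category of finite sets of natural numbers and injective functions, and let FI_{≤n} be its full subcategory of sets of cardinality at most n. Let V be a finitely generated, pointwise finite-dimensional functor FI → Vect_k. If ⋯ → P^1 → P^0 → V → 0 is a minimal projective resolution in the category of functors FI → Vect_k, then its restriction ⋯ → RP^1 → RP^0 → RV → 0 is a minimal projective resolution of RV in the category of functors FI_{≤n} → Vect_k. -/

import Mathlib

open CategoryTheory CategoryTheory.Limits

/-- Objects of the category `FI` : finite sets of natural numbers. -/
structure FIcat where
  carrier : Finset ℕ

/-- The category `FI` : finite sets of natural numbers with injections between them. -/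
instance : Category FIcat where
  Hom S T := { f : S.carrier → T.carrier // Function.Injective f }
  id S := ⟨id, fun _ _ h => h⟩
  comp f g := ⟨g.1 ∘ f.1, fun _ _ h => f.2 (g.2 h)⟩

/-- A subfunctor of a functor `V : C ⥤ ModuleCat k`. -/
structure Subfunctor {k : Type} [Field k] {C : Type*} [Category C]
    (V : C ⥤ ModuleCat.{0} k) where
  toFun : ∀ S : C, Submodule k (V.obj S)
  map_mem : ∀ {S T : C} (f : S ⟶ T) (v : V.obj S), v ∈ toFun S → V.map f v ∈ toFun T

/-- A functor `V : C ⥤ ModuleCat k` is finitely generated if there are finitely many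
elements `v i ∈ V (S i)` such that the only subfunctor of `V` containing all of them is
`V` itself. -/
def IsFinitelyGenerated {k : Type} [Field k] {C : Type*} [Category C]
    (V : C ⥤ ModuleCat.{0} k) : Prop :=
  ∃ (ι : Type) (_ : Finite ι) (S : ι → C) (v : ∀ i : ι, V.obj (S i)),
    ∀ W : Subfunctor V, (∀ i, v i ∈ W.toFun (S i)) → ∀ X, W.toFun X = ⊤

/-- `p : P ⟶ V` is a projective cover. -/
def IsProjectiveCover {A : Type*} [Category A] {P V : A} (p : P ⟶ V) : Prop :=
  Projective P ∧ Epi p ∧ ∀ (Q : A) (g : Q ⟶ P), Epi (g ≫ p) → Epi g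

/-- `⋯ → P 1 → P 0 → V → 0` is a minimal projective resolution : `ε : P 0 ⟶ V` is a
projective cover and, for each `s`, the induced map `P (s+1) ⟶ ker (P s ⟶ P (s-1))`
(with `P (-1) = V`) is a projective cover.  (This in particular forces the complex to be
exact, i.e. a projective resolution.) -/
def IsMinimalProjectiveResolution {A : Type*} [Category A] [Abelian A]
    (V : A) (P : ℕ → A) (d : ∀ s : ℕ, P (s + 1) ⟶ P s) (ε : P 0 ⟶ V) : Prop :=
  ∃ (w0 : d 0 ≫ ε = 0) (w : ∀ s, d (s + 1) ≫ d s = 0),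
    IsProjectiveCover ε ∧
    IsProjectiveCover (kernel.lift ε (d 0) w0) ∧
    ∀ s, IsProjectiveCover (kernel.lift (d s) (d (s + 1)) (w s))

/-!
Call a full subcategory `Z` of `C` downward closed if `S ⟶ T` and `T ∈ Z` imply `S ∈ Z`;
`FI_{≤n}` is one, since injections do not decrease cardinality. Restriction `R` to such a `Z`
preserves kernels and epimorphisms (both are computed pointwise), and it preserves projectives
because it has an epimorphism-preserving right adjoint, extension by zero. It also preserves
superfluity of an epimorphism `p : A ⟶ B`: if `g : Q ⟶ R A` has `g ≫ R p` epi, the subfunctor of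
`A` which is the range of `g` on `Z` and all of `A` off `Z` still maps onto `B`, hence is `A`.
So `R` carries projective covers to projective covers, and with them minimal resolutions.
-/

def IsDownwardClosed {C : Type*} [Category C] (Z : ObjectProperty C) : Prop :=
  ∀ ⦃S T : C⦄, (S ⟶ T) → Z T → Z S

theorem IsProjectiveCover.comp_isIso {A : Type*} [Category A] {P V W : A} {p : P ⟶ V}
    (h : IsProjectiveCover p) (i : V ⟶ W) [IsIso i] : IsProjectiveCover (p ≫ i) :=
  have := h.2.1
  ⟨h.1, epi_comp p i, fun Q g hg =>
    h.2.2 Q g ((epi_comp_iff_of_isIso _ i).1 (by rwa [Category.assoc]))⟩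

theorem whiskerLeft_comp_whiskerLeft_eq_zero {C D E : Type*} [Category C] [Category D]
    [Category E] [HasZeroMorphisms E] {F G H : D ⥤ E} {f : F ⟶ G} {g : G ⟶ H} (hfg : f ≫ g = 0)
    (I : C ⥤ D) :
    Functor.whiskerLeft I f ≫ Functor.whiskerLeft I g = 0 := by
  rw [← Functor.whiskerLeft_comp, hfg]
  rfl

section
variable {k : Type} [Field k] {C : Type*} [Category C] {Z : ObjectProperty C}

theorem epi_iff_surjective_app {F G : C ⥤ ModuleCat.{0} k} (f : F ⟶ G) :
    Epi f ↔ ∀ X, Function.Surjective (f.app X) := by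
  simp only [NatTrans.epi_iff_epi_app, ModuleCat.epi_iff_surjective]

/-- Extension by zero: the value at `S` is `B S` if `S ∈ Z` and `0` otherwise, encoded as a
product indexed by the proofs of `Z S`. -/
noncomputable def extendByZeroObj (hZ : IsDownwardClosed Z)
    (B : Z.FullSubcategory ⥤ ModuleCat.{0} k) : C ⥤ ModuleCat.{0} k where
  obj S := ModuleCat.of k (∀ h : PLift (Z S), B.obj ⟨S, h.down⟩)
  map f := ModuleCat.ofHom <| LinearMap.pi fun hT =>
    (B.map (ObjectProperty.homMk f : ⟨_, hZ f hT.down⟩ ⟶ ⟨_, hT.down⟩)).hom ∘ₗ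
      LinearMap.proj ⟨hZ f hT.down⟩
  map_id S := by
    refine ModuleCat.hom_ext (LinearMap.ext fun x => funext fun h => ?_)
    exact ConcreteCategory.congr_hom (B.map_id _) (x h)
  map_comp {S T U} f g := by
    refine ModuleCat.hom_ext (LinearMap.ext fun x => funext fun h => ?_)
    exact ConcreteCategory.congr_hom (B.map_comp
      (ObjectProperty.homMk f : ⟨S, hZ f (hZ g h.down)⟩ ⟶ ⟨T, hZ g h.down⟩)
      (ObjectProperty.homMk g : ⟨T, hZ g h.down⟩ ⟶ ⟨U, h.down⟩)) _

noncomputable def extendByZero (hZ : IsDownwardClosed Z) :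
    (Z.FullSubcategory ⥤ ModuleCat.{0} k) ⥤ (C ⥤ ModuleCat.{0} k) where
  obj := extendByZeroObj hZ
  map f :=
    { app S := ModuleCat.ofHom <| LinearMap.pi fun h =>
        (f.app ⟨S, h.down⟩).hom ∘ₗ LinearMap.proj h
      naturality S T g := by
        refine ModuleCat.hom_ext (LinearMap.ext fun x => funext fun h => ?_)
        exact ConcreteCategory.congr_hom (f.naturality
          (ObjectProperty.homMk g : ⟨S, hZ g h.down⟩ ⟶ ⟨T, h.down⟩)) (x ⟨hZ g h.down⟩) }

noncomputable def restrictExtendByZeroAdjunction (hZ : IsDownwardClosed Z) :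
    (Functor.whiskeringLeft _ _ (ModuleCat.{0} k)).obj Z.ι ⊣ extendByZero hZ :=
  Adjunction.mkOfHomEquiv
    { homEquiv P B :=
        { toFun f :=
            { app S := ModuleCat.ofHom <| LinearMap.pi fun h => (f.app ⟨S, h.down⟩).hom
              naturality S T g := by
                refine ModuleCat.hom_ext (LinearMap.ext fun x => funext fun h => ?_)
                exact ConcreteCategory.congr_hom (f.naturality
                  (ObjectProperty.homMk g : ⟨S, hZ g h.down⟩ ⟶ ⟨T, h.down⟩)) x }
          invFun f :=
            { app X := ModuleCat.ofHom <| LinearMap.proj ⟨X.property⟩ ∘ₗ (f.app X.obj).hom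
              naturality X Y g := by
                refine ModuleCat.hom_ext (LinearMap.ext fun x => ?_)
                exact congr_fun (ConcreteCategory.congr_hom (f.naturality g.hom) x)
                  ⟨Y.property⟩ }
          left_inv f := rfl
          right_inv f := rfl }
      homEquiv_naturality_left_symm f g := rfl
      homEquiv_naturality_right f g := rfl }

instance (hZ : IsDownwardClosed Z) : (extendByZero (k := k) hZ).PreservesEpimorphisms where
  preserves {A B} f hf := by
    rw [epi_iff_surjective_app] at hf ⊢
    intro S y
    choose x hx using fun h : PLift (Z S) => hf ⟨S, h.down⟩ (y h)
    exact ⟨x, funext hx⟩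

theorem projective_ι_comp (hZ : IsDownwardClosed Z) {P : C ⥤ ModuleCat.{0} k}
    (hP : Projective P) : Projective (Z.ι ⋙ P) :=
  (restrictExtendByZeroAdjunction hZ).map_projective P hP

end

namespace Subfunctor
variable {k : Type} [Field k] {C : Type*} [Category C] {A : C ⥤ ModuleCat.{0} k}

def toFunctor (W : Subfunctor A) : C ⥤ ModuleCat.{0} k where
  obj S := ModuleCat.of k (W.toFun S)
  map f := ModuleCat.ofHom ((A.map f).hom.restrict (W.map_mem f))
  map_id S := by ext x; exact ConcreteCategory.congr_hom (A.map_id S) x.1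
  map_comp f g := by ext x; exact ConcreteCategory.congr_hom (A.map_comp f g) x.1

def ι (W : Subfunctor A) : W.toFunctor ⟶ A where
  app S := ModuleCat.ofHom (W.toFun S).subtype

variable {Z : ObjectProperty C}

/-- The range of `g` on `Z`, and everything off `Z`. -/
def rangeOn (hZ : IsDownwardClosed Z) {Q : Z.FullSubcategory ⥤ ModuleCat.{0} k}
    (g : Q ⟶ Z.ι ⋙ A) : Subfunctor A where
  toFun S := ⨅ h : Z S, LinearMap.range (g.app ⟨S, h⟩).hom
  map_mem {S T} f x hx := by
    simp only [Submodule.mem_iInf, LinearMap.mem_range] at hx ⊢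
    intro hT
    obtain ⟨q, rfl⟩ := hx (hZ f hT)
    exact ⟨Q.map (ObjectProperty.homMk f : ⟨S, hZ f hT⟩ ⟶ ⟨T, hT⟩) q,
      ConcreteCategory.congr_hom (g.naturality _) q⟩

end Subfunctor

section
variable {k : Type} [Field k] {C : Type*} [Category C] {Z : ObjectProperty C}

theorem epi_whiskerLeft_ι {A B : C ⥤ ModuleCat.{0} k} (p : A ⟶ B) [hp : Epi p] :
    Epi (Functor.whiskerLeft Z.ι p) :=
  (epi_iff_surjective_app _).2 fun X => (epi_iff_surjective_app p).1 hp X.obj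

theorem epi_of_epi_comp_whiskerLeft_ι (hZ : IsDownwardClosed Z) {A B : C ⥤ ModuleCat.{0} k}
    (p : A ⟶ B) [Epi p]
    (hp : ∀ (Q : C ⥤ ModuleCat.{0} k) (g : Q ⟶ A), Epi (g ≫ p) → Epi g)
    {Q : Z.FullSubcategory ⥤ ModuleCat.{0} k} (g : Q ⟶ Z.ι ⋙ A)
    (hg : Epi (g ≫ Functor.whiskerLeft Z.ι p)) : Epi g := by
  have hW : Epi ((Subfunctor.rangeOn hZ g).ι ≫ p) := by
    rw [epi_iff_surjective_app] at hg ⊢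
    intro S y
    by_cases hS : Z S
    · obtain ⟨q, rfl⟩ := hg ⟨S, hS⟩ y
      exact ⟨⟨g.app _ q, Submodule.mem_iInf _ |>.2 fun _ => ⟨q, rfl⟩⟩, rfl⟩
    · obtain ⟨a, rfl⟩ := (epi_iff_surjective_app p).1 ‹_› S y
      exact ⟨⟨a, Submodule.mem_iInf _ |>.2 fun h => (hS h).elim⟩, rfl⟩
  rw [epi_iff_surjective_app]
  intro X y
  obtain ⟨⟨x, hx⟩, rfl⟩ := (epi_iff_surjective_app _).1 (hp _ _ hW) X.obj y
  exact (Submodule.mem_iInf _).1 hx X.property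

theorem IsProjectiveCover.whiskerLeft_ι (hZ : IsDownwardClosed Z)
    {A B : C ⥤ ModuleCat.{0} k} {p : A ⟶ B} (h : IsProjectiveCover p) :
    IsProjectiveCover (Functor.whiskerLeft Z.ι p) :=
  have := h.2.1
  ⟨projective_ι_comp hZ h.1, epi_whiskerLeft_ι p,
    fun _ g hg => epi_of_epi_comp_whiskerLeft_ι hZ p h.2.2 g hg⟩

theorem IsProjectiveCover.whiskerLeft_ι_kernelLift (hZ : IsDownwardClosed Z)
    {X A B : C ⥤ ModuleCat.{0} k} {f : A ⟶ B} {q : X ⟶ A} {w : q ≫ f = 0}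
    (w' : Functor.whiskerLeft Z.ι q ≫ Functor.whiskerLeft Z.ι f = 0)
    (h : IsProjectiveCover (kernel.lift f q w)) :
    IsProjectiveCover
      (kernel.lift (Functor.whiskerLeft Z.ι f) (Functor.whiskerLeft Z.ι q) w') := by
  let R := (Functor.whiskeringLeft _ _ (ModuleCat.{0} k)).obj Z.ι
  have hlift : kernel.lift (Functor.whiskerLeft Z.ι f) (Functor.whiskerLeft Z.ι q) w' =
      Functor.whiskerLeft Z.ι (kernel.lift f q w) ≫ kernelComparison f R := by
    have hι : kernelComparison f R ≫ kernel.ι (Functor.whiskerLeft Z.ι f) =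
        Functor.whiskerLeft Z.ι (kernel.ι f) := kernelComparison_comp_ι f R
    rw [← cancel_mono (kernel.ι _), kernel.lift_ι, Category.assoc, hι,
      ← Functor.whiskerLeft_comp, kernel.lift_ι]
  rw [hlift]
  exact (h.whiskerLeft_ι hZ).comp_isIso _

theorem IsMinimalProjectiveResolution.whiskerLeft_ι (hZ : IsDownwardClosed Z)
    {V : C ⥤ ModuleCat.{0} k} {P : ℕ → C ⥤ ModuleCat.{0} k} {d : ∀ s, P (s + 1) ⟶ P s}
    {ε : P 0 ⟶ V} (h : IsMinimalProjectiveResolution V P d ε) :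
    IsMinimalProjectiveResolution (Z.ι ⋙ V) (fun s => Z.ι ⋙ P s)
      (fun s => Functor.whiskerLeft Z.ι (d s)) (Functor.whiskerLeft Z.ι ε) := by
  obtain ⟨w0, w, hε, h0, hs⟩ := h
  exact ⟨whiskerLeft_comp_whiskerLeft_eq_zero w0 _,
    fun s => whiskerLeft_comp_whiskerLeft_eq_zero (w s) _, hε.whiskerLeft_ι hZ,
    h0.whiskerLeft_ι_kernelLift hZ _, fun s => (hs s).whiskerLeft_ι_kernelLift hZ _⟩

end

theorem FIcat.card_le_of_hom {S T : FIcat} (f : S ⟶ T) : S.carrier.card ≤ T.carrier.card := by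
  simpa using Fintype.card_le_of_injective f.1 f.2

theorem restriction_preserves_minimal_projective_resolutions_general (k : Type) [Field k] (n : ℕ)
    (V : FIcat ⥤ ModuleCat.{0} k)
    (P : ℕ → (FIcat ⥤ ModuleCat.{0} k)) (d : ∀ s : ℕ, P (s + 1) ⟶ P s) (ε : P 0 ⟶ V)
    (hmin : IsMinimalProjectiveResolution V P d ε) :
    IsMinimalProjectiveResolution
      (ObjectProperty.ι (fun S : FIcat => S.carrier.card ≤ n) ⋙ V)
      (fun s => ObjectProperty.ι (fun S : FIcat => S.carrier.card ≤ n) ⋙ P s)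
      (fun s => Functor.whiskerLeft (ObjectProperty.ι fun S : FIcat => S.carrier.card ≤ n) (d s))
      (Functor.whiskerLeft (ObjectProperty.ι fun S : FIcat => S.carrier.card ≤ n) ε) :=
  hmin.whiskerLeft_ι fun _ _ f hT => (FIcat.card_le_of_hom f).trans hT

theorem restriction_preserves_minimal_projective_resolutions (k : Type) [Field k] (n : ℕ)
    (V : FIcat ⥤ ModuleCat.{0} k)
    (hfd : ∀ S : FIcat, FiniteDimensional k (V.obj S))
    (hfg : IsFinitelyGenerated V)
    (P : ℕ → (FIcat ⥤ ModuleCat.{0} k)) (d : ∀ s : ℕ, P (s + 1) ⟶ P s) (ε : P 0 ⟶ V)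
    (hmin : IsMinimalProjectiveResolution V P d ε) :
    IsMinimalProjectiveResolution
      (ObjectProperty.ι (fun S : FIcat => S.carrier.card ≤ n) ⋙ V)
      (fun s => ObjectProperty.ι (fun S : FIcat => S.carrier.card ≤ n) ⋙ P s)
      (fun s => Functor.whiskerLeft (ObjectProperty.ι fun S : FIcat => S.carrier.card ≤ n) (d s))
      (Functor.whiskerLeft (ObjectProperty.ι fun S : FIcat => S.carrier.card ≤ n) ε) :=
  restriction_preserves_minimal_projective_resolutions_general k n V P d ε hmin
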